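/- arXiv:2503.13099 — 4 statements merged into one kernel-verified Lean document; each statement's English description precedes it below -/
import Mathlib

section
/- Suppose F = f + μc with f convex smooth with L-Lipschitz gradient and c convex, and let Δ_k = d_kᵀ∇f(x_k) + μ(c(x_k + d_k) − c(x_k)) < 0. If x_{k+1} = x_k + α_k d_k with α_k ∈ (0,1] satisfies the semi-monotone sufficient descent condition ν(α_k)|1 − λ(α_k)| ≥ θ, where ν(α_k) = (F(x_{k+1}) − F(x_k))/(α_k Δ_k), λ(α_k) = (F(x_{k+1}) − R_k)/(α_k Δ_k) with R_k ≥ F(x_k), and additionally F(x_{k+1}) − R_k ≥ −(α_k²/2)L‖d_k‖² + α_k Δ_k, then for any step size α_k' with F(x_k + α_k' d_k) ≤ F(x_{k+1}) we have (F(x_k) − F(x_k + α_k' d_k))·‖d_k‖²/Δ_k² ≥ 2θ/L. -/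
open RealInnerProductSpace

/-!
The descent lemma for `f` and convexity of `c` give `F x₁ ≤ F xₖ + αΔ + s` with
`s = α²L‖d‖²/2`; together with the hypothesis `F x₁ - R ≥ αΔ - s` and `R ≥ F xₖ` this
gives `|1 - λ| ≤ s / (-αΔ)`. The sufficient descent condition `θ ≤ ν |1 - λ|` then bounds
`θ (αΔ)²` by `(F xₖ - F x₁) s`, and the factor `α²` cancels.
-/

section

variable {E : Type*} [NormedAddCommGroup E] [InnerProductSpace ℝ E] [CompleteSpace E]

theorem HasGradientAt.hasDerivAt_comp_add_smul {f : E → ℝ} {g x v : E} {t : ℝ}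
    (hf : HasGradientAt f g (x + t • v)) :
    HasDerivAt (fun s : ℝ => f (x + s • v)) ⟪g, v⟫ t := by
  have hline : HasDerivAt (fun s : ℝ => x + s • v) v t := by
    simpa using ((hasDerivAt_id t).smul_const v).const_add x
  simpa [Function.comp_def] using hf.hasFDerivAt.comp_hasDerivAt t hline

theorem le_add_inner_add_sq_of_lipschitz_gradient {f : E → ℝ} {g : E → E} {L : ℝ}
    (hf : ∀ x, HasGradientAt f (g x) x) (hg : ∀ x y, ‖g x - g y‖ ≤ L * ‖x - y‖) (x v : E) :
    f (x + v) ≤ f x + ⟪g x, v⟫ + L / 2 * ‖v‖ ^ 2 := by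
  -- `φ` is antitone on `[0, ∞)`: by Cauchy–Schwarz and the Lipschitz bound, `φ' ≤ 0` there.
  set φ : ℝ → ℝ := fun t => f (x + t • v) - t * ⟪g x, v⟫ - L / 2 * t ^ 2 * ‖v‖ ^ 2
  have hφ : ∀ t, HasDerivAt φ (⟪g (x + t • v), v⟫ - ⟪g x, v⟫ - L * t * ‖v‖ ^ 2) t := by
    intro t
    refine ((((hf (x + t • v)).hasDerivAt_comp_add_smul).sub
      ((hasDerivAt_id t).mul_const ⟪g x, v⟫)).sub
      (((hasDerivAt_pow 2 t).const_mul (L / 2)).mul_const (‖v‖ ^ 2))).congr_deriv ?_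
    ring
  have hφ' : ∀ t ∈ interior (Set.Ici (0 : ℝ)),
      ⟪g (x + t • v), v⟫ - ⟪g x, v⟫ - L * t * ‖v‖ ^ 2 ≤ 0 := by
    rw [interior_Ici]
    intro t (ht : 0 < t)
    have hlip : ‖g (x + t • v) - g x‖ ≤ L * (t * ‖v‖) := by
      simpa [norm_smul, abs_of_pos ht] using hg (x + t • v) x
    have hcs : ⟪g (x + t • v), v⟫ - ⟪g x, v⟫ ≤ L * t * ‖v‖ ^ 2 :=
      calc ⟪g (x + t • v), v⟫ - ⟪g x, v⟫ = ⟪g (x + t • v) - g x, v⟫ :=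
            (inner_sub_left _ _ _).symm
        _ ≤ ‖g (x + t • v) - g x‖ * ‖v‖ := real_inner_le_norm _ _
        _ ≤ L * (t * ‖v‖) * ‖v‖ := by gcongr
        _ = L * t * ‖v‖ ^ 2 := by ring
    linarith
  have hanti : AntitoneOn φ (Set.Ici 0) :=
    antitoneOn_of_hasDerivWithinAt_nonpos (convex_Ici 0)
      (fun t _ => (hφ t).continuousAt.continuousWithinAt)
      (fun t _ => (hφ t).hasDerivWithinAt) hφ'
  have h10 : φ 1 ≤ φ 0 := hanti (Set.mem_Ici.2 le_rfl) (Set.mem_Ici.2 zero_le_one) zero_le_one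
  simp only [φ, one_smul, zero_smul, add_zero] at h10
  linarith

theorem ConvexOn.add_smul_sub_le {F : Type*} [AddCommGroup F] [Module ℝ F] {s : Set F}
    {c : F → ℝ} (hc : ConvexOn ℝ s c) {x d : F} (hx : x ∈ s) (hxd : x + d ∈ s) {α : ℝ}
    (hα0 : 0 ≤ α) (hα1 : α ≤ 1) :
    c (x + α • d) - c x ≤ α * (c (x + d) - c x) := by
  have h := hc.2 hx hxd (sub_nonneg.2 hα1) hα0 (sub_add_cancel 1 α)
  rw [smul_add, ← add_assoc, ← add_smul, sub_add_cancel, one_smul, smul_eq_mul, smul_eq_mul] at h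
  linarith

theorem composite_add_smul_le {f c : E → ℝ} {g : E → E} {L μ : ℝ}
    (hf : ∀ x, HasGradientAt f (g x) x) (hg : ∀ x y, ‖g x - g y‖ ≤ L * ‖x - y‖)
    (hc : ConvexOn ℝ Set.univ c) (hμ : 0 ≤ μ) (x d : E) {α : ℝ} (hα0 : 0 ≤ α) (hα1 : α ≤ 1) :
    f (x + α • d) + μ * c (x + α • d) ≤
      f x + μ * c x + α * (⟪d, g x⟫ + μ * (c (x + d) - c x)) + α ^ 2 * L / 2 * ‖d‖ ^ 2 := by
  have hfα := le_add_inner_add_sq_of_lipschitz_gradient hf hg x (α • d)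
  rw [real_inner_smul_right, real_inner_comm, norm_smul, mul_pow, Real.norm_eq_abs, sq_abs]
    at hfα
  have hcα := mul_le_mul_of_nonneg_left
    (hc.add_smul_sub_le (Set.mem_univ x) (Set.mem_univ (x + d)) hα0 hα1) hμ
  linarith

end

theorem mul_sq_le_of_le_div_mul_abs_one_sub_div {t s θ p q : ℝ} (ht : t < 0) (hθ : 0 < θ)
    (hq : |q - t| ≤ s) (hsuf : θ ≤ p / t * |1 - q / t|) : θ * t ^ 2 ≤ -p * s := by
  have hratio : |1 - q / t| ≤ s / -t := by
    rw [one_sub_div ht.ne, abs_div, abs_of_neg ht, abs_sub_comm]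
    exact div_le_div_of_nonneg_right hq (neg_nonneg.2 ht.le)
  have hcoef : 0 ≤ p / t := by
    by_contra! hneg
    nlinarith [abs_nonneg (1 - q / t)]
  have hθs : θ ≤ -p * s / t ^ 2 := calc
    θ ≤ p / t * (s / -t) := hsuf.trans (mul_le_mul_of_nonneg_left hratio hcoef)
    _ = -p * s / t ^ 2 := by field_simp
  rwa [le_div_iff₀ (pow_two_pos_of_ne_zero ht.ne)] at hθs

theorem bounded_gain_general (n : ℕ) (f c : EuclideanSpace ℝ (Fin n) → ℝ)
    (g : EuclideanSpace ℝ (Fin n) → EuclideanSpace ℝ (Fin n))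
    (hdiff : ∀ x, HasGradientAt f (g x) x)
    (L : ℝ) (hL : 0 < L) (hlip : ∀ x y, ‖g x - g y‖ ≤ L * ‖x - y‖)
    (hc : ConvexOn ℝ Set.univ c) (μ : ℝ) (hμ : 0 < μ) (θ : ℝ) (hθ : 0 < θ)
    (F : EuclideanSpace ℝ (Fin n) → ℝ) (hF : ∀ x, F x = f x + μ * c x)
    (xk dk : EuclideanSpace ℝ (Fin n)) (Δ : ℝ)
    (hΔdef : Δ = ⟪dk, g xk⟫ + μ * (c (xk + dk) - c xk)) (hΔ : Δ < 0)
    (α : ℝ) (hα0 : 0 < α) (hα1 : α ≤ 1)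
    (x1 : EuclideanSpace ℝ (Fin n)) (hx1 : x1 = xk + α • dk)
    (R : ℝ) (hR : F xk ≤ R)
    (hsuf : ((F x1 - F xk) / (α * Δ)) * |1 - (F x1 - R) / (α * Δ)| ≥ θ)
    (hlow : F x1 - R ≥ -(α ^ 2 / 2) * L * ‖dk‖ ^ 2 + α * Δ) :
    ∀ α' : ℝ, F (xk + α' • dk) ≤ F x1 →
      (F xk - F (xk + α' • dk)) * ‖dk‖ ^ 2 / Δ ^ 2 ≥ 2 * θ / L := by
  intro α' hα'
  have hup : F x1 ≤ F xk + α * Δ + α ^ 2 * L / 2 * ‖dk‖ ^ 2 := by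
    rw [hF, hF, hx1, hΔdef]
    exact composite_add_smul_le hdiff hlip hc hμ.le xk dk hα0.le hα1
  have hq : |F x1 - R - α * Δ| ≤ α ^ 2 * L / 2 * ‖dk‖ ^ 2 :=
    abs_sub_le_iff.2 ⟨by linarith, by linarith⟩
  have hscaled := mul_sq_le_of_le_div_mul_abs_one_sub_div (mul_neg_of_pos_of_neg hα0 hΔ) hθ hq hsuf
  have hgain : θ * Δ ^ 2 ≤ (F xk - F x1) * (L / 2) * ‖dk‖ ^ 2 := by
    refine le_of_mul_le_mul_left ?_ (pow_pos hα0 2)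
    linarith
  rw [ge_iff_le, div_le_div_iff₀ hL (pow_two_pos_of_ne_zero hΔ.ne)]
  nlinarith [mul_nonneg hL.le (sq_nonneg ‖dk‖)]

/-- Theorem 1: bounded gain in the target function under the semi-monotone
sufficient descent condition. -/
theorem bounded_gain (n : ℕ) (f c : EuclideanSpace ℝ (Fin n) → ℝ)
    (g : EuclideanSpace ℝ (Fin n) → EuclideanSpace ℝ (Fin n))
    (hf : ConvexOn ℝ Set.univ f) (hdiff : ∀ x, HasGradientAt f (g x) x)
    (L : ℝ) (hL : 0 < L) (hlip : ∀ x y, ‖g x - g y‖ ≤ L * ‖x - y‖)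
    (hc : ConvexOn ℝ Set.univ c) (μ : ℝ) (hμ : 0 < μ) (θ : ℝ) (hθ : 0 < θ)
    (F : EuclideanSpace ℝ (Fin n) → ℝ) (hF : ∀ x, F x = f x + μ * c x)
    (xk dk : EuclideanSpace ℝ (Fin n)) (Δ : ℝ)
    (hΔdef : Δ = ⟪dk, g xk⟫ + μ * (c (xk + dk) - c xk)) (hΔ : Δ < 0)
    (α : ℝ) (hα0 : 0 < α) (hα1 : α ≤ 1)
    (x1 : EuclideanSpace ℝ (Fin n)) (hx1 : x1 = xk + α • dk)
    (R : ℝ) (hR : F xk ≤ R)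
    (hsuf : ((F x1 - F xk) / (α * Δ)) * |1 - (F x1 - R) / (α * Δ)| ≥ θ)
    (hlow : F x1 - R ≥ -(α ^ 2 / 2) * L * ‖dk‖ ^ 2 + α * Δ) :
    ∀ α' : ℝ, F (xk + α' • dk) ≤ F x1 →
      (F xk - F (xk + α' • dk)) * ‖dk‖ ^ 2 / Δ ^ 2 ≥ 2 * θ / L :=
  bounded_gain_general n f c g hdiff L hL hlip hc μ hμ θ hθ F hF xk dk Δ hΔdef hΔ α hα0 hα1 x1 hx1 R
    hR hsuf hlow
end

section
/- Let x* be a stationary point of F = f + μc (i.e. ∇f(x*)ᵀ(x − x*) + μ(ζ − c(x*)) ≥ 0 for all (x,ζ) in the epigraph of c). If f is strongly convex with constant L' > 0 and ∇f is L-Lipschitz, then for d_k = P_c(x_k − τ_k∇f(x_k), μτ_k) − x_k with τ_k > 0, one has ‖x_k − x*‖ ≤ ((1 + τ_k L)/(τ_k L')) ‖d_k‖. -/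
/-!
The proximal step `x⁺` satisfies the variational inequality
`⟪z - x⁺, y - x⁺⟫ ≤ μτ (c y - c x⁺)`, obtained by comparing `x⁺` with the points of the segment
`[x⁺, y]` and letting them tend to `x⁺`. Adding it at `y = x*` to `τ` times the stationarity
condition at `(x⁺, c x⁺)` cancels the `c`-terms and leaves
`⟪d + τ (g x - g x*), x⁺ - x*⟫ ≤ 0`, where `x⁺ - x* = (x - x*) + d`. Strong monotonicity,
Cauchy–Schwarz and the Lipschitz bound turn this into
`τ L' ‖x - x*‖² ≤ (1 + τ L) ‖x - x*‖ ‖d‖`.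
-/

open RealInnerProductSpace Set Filter Topology

theorem nonneg_of_forall_add_mul_nonneg {a b : ℝ} (h : ∀ t ∈ Ioc (0 : ℝ) 1, 0 ≤ a + t * b) :
    0 ≤ a := by
  have hlim : Tendsto (fun t : ℝ => a + t * b) (𝓝[>] 0) (𝓝 a) :=
    (Continuous.tendsto' (f := fun t : ℝ => a + t * b) (by fun_prop) 0 a (by simp)).mono_left
      nhdsWithin_le_nhds
  refine ge_of_tendsto hlim ?_
  filter_upwards [Ioc_mem_nhdsGT one_pos] using h

variable {E : Type*} [NormedAddCommGroup E] [InnerProductSpace ℝ E]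

theorem ConvexOn.inner_le_of_isMinOn_prox {s : Set E} {c : E → ℝ} (hc : ConvexOn ℝ s c)
    {θ : ℝ} (hθ : 0 ≤ θ) {z p : E} (hp : IsMinOn (fun y => θ * c y + 1 / 2 * ‖z - y‖ ^ 2) s p)
    (hps : p ∈ s) {y : E} (hys : y ∈ s) :
    ⟪z - p, y - p⟫ ≤ θ * (c y - c p) := by
  rw [← sub_nonneg]
  refine nonneg_of_forall_add_mul_nonneg (b := ‖y - p‖ ^ 2 / 2) fun t ⟨ht0, ht1⟩ => ?_
  have hseg : (1 - t) • p + t • y = p + t • (y - p) := by module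
  have hmem : p + t • (y - p) ∈ s := by
    rw [← hseg]
    exact hc.1 hps hys (sub_nonneg.mpr ht1) ht0.le (sub_add_cancel 1 t)
  have hmin := isMinOn_iff.mp hp _ hmem
  have hconv : c (p + t • (y - p)) ≤ (1 - t) * c p + t * c y := by
    simpa only [hseg, smul_eq_mul] using
      hc.2 hps hys (sub_nonneg.mpr ht1) ht0.le (sub_add_cancel 1 t)
  have hnorm : ‖z - (p + t • (y - p))‖ ^ 2
      = ‖z - p‖ ^ 2 - 2 * t * ⟪z - p, y - p⟫ + t ^ 2 * ‖y - p‖ ^ 2 := by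
    rw [show z - (p + t • (y - p)) = (z - p) - t • (y - p) by abel, norm_sub_sq_real,
      real_inner_smul_right, norm_smul, Real.norm_eq_abs, abs_of_pos ht0]
    ring
  simp only [hnorm] at hmin
  have := mul_le_mul_of_nonneg_left hconv hθ
  refine le_of_mul_le_mul_left ?_ ht0
  linarith

theorem norm_le_of_inner_add_smul_nonpos {a d G : E} {L' L τ : ℝ}
    (hL' : 0 < L') (hL : 0 ≤ L) (hτ : 0 < τ)
    (hGa : ⟪G, a⟫ ≥ L' * ‖a‖ ^ 2) (hG : ‖G‖ ≤ L * ‖a‖) (h : ⟪d + τ • G, a + d⟫ ≤ 0) :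
    ‖a‖ ≤ (1 + τ * L) / (τ * L') * ‖d‖ := by
  have hexp : ⟪d + τ • G, a + d⟫ = τ * ⟪G, a⟫ + ⟪d, a + τ • G⟫ + ‖d‖ ^ 2 := by
    simp only [inner_add_left, inner_add_right, real_inner_smul_left, real_inner_smul_right,
      real_inner_self_eq_norm_sq, real_inner_comm G d]
    ring
  have hsq : τ * L' * ‖a‖ ^ 2 ≤ (1 + τ * L) * ‖d‖ * ‖a‖ :=
    calc τ * L' * ‖a‖ ^ 2 ≤ τ * ⟪G, a⟫ := by rw [mul_assoc]; gcongr
      _ ≤ -⟪d, a + τ • G⟫ := by linarith [sq_nonneg ‖d‖]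
      _ ≤ ‖d‖ * ‖a + τ • G‖ := (neg_le_abs _).trans (abs_real_inner_le_norm d _)
      _ ≤ ‖d‖ * (‖a‖ + τ * (L * ‖a‖)) := by
        gcongr
        refine (norm_add_le _ _).trans ?_
        rw [norm_smul, Real.norm_of_nonneg hτ.le]
        gcongr
      _ = (1 + τ * L) * ‖d‖ * ‖a‖ := by ring
  rcases (norm_nonneg a).eq_or_lt with ha | ha
  · rw [← ha]
    positivity
  · rw [div_mul_eq_mul_div, le_div_iff₀ (by positivity)]
    nlinarith

theorem dist_to_stationary_bound_general (n : ℕ) (c : EuclideanSpace ℝ (Fin n) → ℝ)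
    (g : EuclideanSpace ℝ (Fin n) → EuclideanSpace ℝ (Fin n))
    (L' : ℝ) (hL' : 0 < L') (hstr : ∀ x y, ⟪g x - g y, x - y⟫ ≥ L' * ‖x - y‖ ^ 2)
    (L : ℝ) (hL : 0 < L) (hlip : ∀ x y, ‖g x - g y‖ ≤ L * ‖x - y‖)
    (hc : ConvexOn ℝ Set.univ c) (μ : ℝ) (hμ : 0 < μ) (τ : ℝ) (hτ : 0 < τ)
    (xstar : EuclideanSpace ℝ (Fin n))
    (hopt : ∀ x : EuclideanSpace ℝ (Fin n), ∀ ζ : ℝ, c x ≤ ζ →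
      ⟪g xstar, x - xstar⟫ + μ * (ζ - c xstar) ≥ 0)
    (xk xplus dk : EuclideanSpace ℝ (Fin n))
    (hxplus : ∀ y, μ * τ * c xplus + (1 / 2) * ‖(xk - τ • g xk) - xplus‖ ^ 2 ≤
      μ * τ * c y + (1 / 2) * ‖(xk - τ • g xk) - y‖ ^ 2)
    (hdk : dk = xplus - xk) :
    ‖xk - xstar‖ ≤ ((1 + τ * L) / (τ * L')) * ‖dk‖ := by
  have hprox := hc.inner_le_of_isMinOn_prox (by positivity) (isMinOn_univ_iff.mpr hxplus)
    (mem_univ xplus) (mem_univ xstar)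
  have hstat := mul_le_mul_of_nonneg_left (hopt xplus (c xplus) le_rfl) hτ.le
  refine norm_le_of_inner_add_smul_nonpos hL' hL.le hτ (hstr xk xstar) (hlip xk xstar) ?_
  have hz : xk - τ • g xk - xplus = -(dk + τ • g xk) := by rw [hdk]; abel
  have hx : xk - xstar + dk = xplus - xstar := by rw [hdk]; abel
  rw [hz, ← neg_sub xplus xstar, inner_neg_neg] at hprox
  rw [hx, smul_sub, ← add_sub_assoc, inner_sub_left, real_inner_smul_left]
  linarith

/-- Lemma 2: under strong convexity and Lipschitz gradient,
`‖x_k − x*‖ ≤ ((1 + τL)/(τL'))‖d_k‖`. -/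
theorem dist_to_stationary_bound (n : ℕ) (f c : EuclideanSpace ℝ (Fin n) → ℝ)
    (g : EuclideanSpace ℝ (Fin n) → EuclideanSpace ℝ (Fin n))
    (hdiff : ∀ x, HasGradientAt f (g x) x)
    (L' : ℝ) (hL' : 0 < L') (hstr : ∀ x y, ⟪g x - g y, x - y⟫ ≥ L' * ‖x - y‖ ^ 2)
    (L : ℝ) (hL : 0 < L) (hlip : ∀ x y, ‖g x - g y‖ ≤ L * ‖x - y‖)
    (hc : ConvexOn ℝ Set.univ c) (μ : ℝ) (hμ : 0 < μ) (τ : ℝ) (hτ : 0 < τ)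
    (xstar : EuclideanSpace ℝ (Fin n))
    (hopt : ∀ x : EuclideanSpace ℝ (Fin n), ∀ ζ : ℝ, c x ≤ ζ →
      ⟪g xstar, x - xstar⟫ + μ * (ζ - c xstar) ≥ 0)
    (xk xplus dk : EuclideanSpace ℝ (Fin n))
    (hxplus : ∀ y, μ * τ * c xplus + (1 / 2) * ‖(xk - τ • g xk) - xplus‖ ^ 2 ≤
      μ * τ * c y + (1 / 2) * ‖(xk - τ • g xk) - y‖ ^ 2)
    (hdk : dk = xplus - xk) :
    ‖xk - xstar‖ ≤ ((1 + τ * L) / (τ * L')) * ‖dk‖ :=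
  dist_to_stationary_bound_general n c g L' hL' hstr L hL hlip hc μ hμ τ hτ xstar hopt xk xplus dk
    hxplus hdk
end

section
/- With d_k = P_c(x_k − τ∇f(x_k), μτ) − x_k and Δ_k = d_kᵀ∇f(x_k) + μ(c(x_k + d_k) − c(x_k)), one has Δ_k ≤ −(1/(2τ))‖d_k‖² for any τ > 0; in particular, if d_k ≠ 0 then Δ_k < 0, i.e. d_k is a descent direction. -/
/-!
Comparing the proximal objective at its minimiser `x⁺` with its value at `x_k` itself gives
the bound. Completing the square, the objective at `y` for the gradient step `x_k - τ ∇f(x_k)`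
equals `τ (⟪y - x_k, ∇f(x_k)⟫ + μ c(y)) + ½‖y - x_k‖²` up to a constant independent of `y`,
so minimality at `x⁺` reads `τ Δ_k + ½‖d_k‖² ≤ 0`.
-/

open RealInnerProductSpace

section Prox

variable {E : Type*} [NormedAddCommGroup E] [InnerProductSpace ℝ E]

/-- The function minimised by the proximal operator `P_c(v, θ)`. -/
noncomputable def proxObjective (c : E → ℝ) (θ : ℝ) (v y : E) : ℝ :=
  θ * c y + 1 / 2 * ‖v - y‖ ^ 2

theorem proxObjective_gradStep (c : E → ℝ) (μ τ : ℝ) (x g y : E) :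
    proxObjective c (μ * τ) (x - τ • g) y =
      τ * (⟪y - x, g⟫ + μ * c y) + 1 / 2 * ‖y - x‖ ^ 2 + τ ^ 2 / 2 * ‖g‖ ^ 2 := by
  have hsplit : x - τ • g - y = -((y - x) + τ • g) := by module
  rw [proxObjective, hsplit, norm_neg, norm_add_sq_real, real_inner_smul_right, norm_smul,
    Real.norm_eq_abs, mul_pow, sq_abs]
  ring

theorem inner_add_sub_le_of_proxObjective_le {c : E → ℝ} {μ τ : ℝ} (hτ : 0 < τ) {x g p : E}
    (hp : proxObjective c (μ * τ) (x - τ • g) p ≤ proxObjective c (μ * τ) (x - τ • g) x) :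
    ⟪p - x, g⟫ + μ * (c p - c x) ≤ -(1 / (2 * τ)) * ‖p - x‖ ^ 2 := by
  rw [proxObjective_gradStep, proxObjective_gradStep, sub_self, inner_zero_left, norm_zero]
    at hp
  rw [neg_mul, one_div, ← div_eq_inv_mul, le_neg, div_le_iff₀ (by positivity)]
  linarith

end Prox

theorem prox_direction_descent_general (n : ℕ) (c : EuclideanSpace ℝ (Fin n) → ℝ)
    (g : EuclideanSpace ℝ (Fin n) → EuclideanSpace ℝ (Fin n))
    (μ : ℝ) (τ : ℝ) (hτ : 0 < τ)
    (xk xplus dk : EuclideanSpace ℝ (Fin n))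
    (hxplus : ∀ y, μ * τ * c xplus + (1 / 2) * ‖(xk - τ • g xk) - xplus‖ ^ 2 ≤
      μ * τ * c y + (1 / 2) * ‖(xk - τ • g xk) - y‖ ^ 2)
    (hdk : dk = xplus - xk) (Δ : ℝ)
    (hΔdef : Δ = ⟪dk, g xk⟫ + μ * (c xplus - c xk)) :
    Δ ≤ -(1 / (2 * τ)) * ‖dk‖ ^ 2 ∧ (dk ≠ 0 → Δ < 0) := by
  have hbound : Δ ≤ -(1 / (2 * τ)) * ‖dk‖ ^ 2 := by
    subst hdk hΔdef
    exact inner_add_sub_le_of_proxObjective_le hτ (hxplus xk)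
  refine ⟨hbound, fun hdk_ne => hbound.trans_lt ?_⟩
  rw [neg_mul, neg_lt_zero]
  exact mul_pos (by positivity) (pow_pos (norm_pos_iff.mpr hdk_ne) 2)

/-- The proximal-gradient direction is a descent direction:
`Δ_k ≤ −(1/(2τ))‖d_k‖²`, and `Δ_k < 0` whenever `d_k ≠ 0`. -/
theorem prox_direction_descent (n : ℕ) (f c : EuclideanSpace ℝ (Fin n) → ℝ)
    (g : EuclideanSpace ℝ (Fin n) → EuclideanSpace ℝ (Fin n))
    (hdiff : ∀ x, HasGradientAt f (g x) x)
    (hc : ConvexOn ℝ Set.univ c) (μ : ℝ) (hμ : 0 < μ) (τ : ℝ) (hτ : 0 < τ)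
    (xk xplus dk : EuclideanSpace ℝ (Fin n))
    (hxplus : ∀ y, μ * τ * c xplus + (1 / 2) * ‖(xk - τ • g xk) - xplus‖ ^ 2 ≤
      μ * τ * c y + (1 / 2) * ‖(xk - τ • g xk) - y‖ ^ 2)
    (hdk : dk = xplus - xk) (Δ : ℝ)
    (hΔdef : Δ = ⟪dk, g xk⟫ + μ * (c xplus - c xk)) :
    Δ ≤ -(1 / (2 * τ)) * ‖dk‖ ^ 2 ∧ (dk ≠ 0 → Δ < 0) :=
  prox_direction_descent_general n c g μ τ hτ xk xplus dk hxplus hdk Δ hΔdef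
end

section
/- If x* satisfies the epigraph optimality condition ∇f(x*)ᵀ(x − x*) + μ(ζ − c(x*)) ≥ 0 for all (x,ζ) with c(x) ≤ ζ, and x_k⁺ = P_c(x_k − τ∇f(x_k), μτ), then (d_k + τ(∇f(x_k) − ∇f(x*)))ᵀ(x* − x_k⁺) ≥ 0, where d_k = x_k⁺ − x_k. -/
/-!
The proximal point `x⁺ = P_c(z, μτ)`, `z = x_k - τ∇f(x_k)`, satisfies the variational inequality
`⟪z - x⁺, y - x⁺⟫ ≤ μτ (c y - c x⁺)` for every `y`: compare its objective value with the one at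
`x⁺ + t (y - x⁺)`, use convexity of `c`, divide by `t` and let `t → 0`. Taking `y = x*`, and the
epigraph optimality condition at the point `(x⁺, c x⁺)` scaled by `τ`, the two `c`-terms cancel.
-/

open RealInnerProductSpace Filter Topology Set

lemma nonpos_of_forall_le_mul {a b : ℝ} (h : ∀ t ∈ Ioo (0 : ℝ) 1, a ≤ t * b) : a ≤ 0 := by
  have hlim : Tendsto (fun t : ℝ => t * b) (𝓝[>] 0) (𝓝 0) := by
    simpa using ((continuous_mul_const b).tendsto 0).mono_left nhdsWithin_le_nhds
  exact ge_of_tendsto hlim (eventually_of_mem (Ioo_mem_nhdsGT one_pos) h)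

section Prox

variable {E : Type*} [NormedAddCommGroup E] [InnerProductSpace ℝ E]

/-- `IsProxPoint (θ • c) x p` says `p = P_c(x, θ)`. -/
def IsProxPoint (φ : E → ℝ) (z p : E) : Prop :=
  ∀ y, φ p + (1 / 2) * ‖z - p‖ ^ 2 ≤ φ y + (1 / 2) * ‖z - y‖ ^ 2

theorem IsProxPoint.inner_le {φ : E → ℝ} {z p : E} (hp : IsProxPoint φ z p)
    (hφ : ConvexOn ℝ univ φ) (y : E) : ⟪z - p, y - p⟫ ≤ φ y - φ p := by
  have key : ∀ t ∈ Ioo (0 : ℝ) 1,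
      ⟪z - p, y - p⟫ - (φ y - φ p) ≤ t * (‖y - p‖ ^ 2 / 2) := by
    rintro t ⟨ht0, ht1⟩
    have hconv : φ (p + t • (y - p)) ≤ (1 - t) * φ p + t * φ y := by
      have hseg : (1 - t) • p + t • y = p + t • (y - p) := by module
      simpa only [smul_eq_mul, hseg] using
        hφ.2 (mem_univ p) (mem_univ y) (sub_nonneg.2 ht1.le) ht0.le (by ring)
    have hnorm : ‖z - (p + t • (y - p))‖ ^ 2
        = ‖z - p‖ ^ 2 - 2 * t * ⟪z - p, y - p⟫ + t ^ 2 * ‖y - p‖ ^ 2 := by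
      rw [show z - (p + t • (y - p)) = (z - p) - t • (y - p) by abel, norm_sub_sq_real,
        real_inner_smul_right, norm_smul, mul_pow, Real.norm_eq_abs, sq_abs]
      ring
    have hmin := hp (p + t • (y - p))
    rw [hnorm] at hmin
    refine le_of_mul_le_mul_left ?_ ht0
    linarith
  linarith [nonpos_of_forall_le_mul key]

end Prox

theorem optimality_prox_ineq_general (n : ℕ) (c : EuclideanSpace ℝ (Fin n) → ℝ)
    (g : EuclideanSpace ℝ (Fin n) → EuclideanSpace ℝ (Fin n))
    (hc : ConvexOn ℝ Set.univ c) (μ : ℝ) (hμ : 0 < μ) (τ : ℝ) (hτ : 0 < τ)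
    (xstar : EuclideanSpace ℝ (Fin n))
    (hopt : ∀ x : EuclideanSpace ℝ (Fin n), ∀ ζ : ℝ, c x ≤ ζ →
      ⟪g xstar, x - xstar⟫ + μ * (ζ - c xstar) ≥ 0)
    (xk xplus dk : EuclideanSpace ℝ (Fin n))
    (hxplus : ∀ y, μ * τ * c xplus + (1 / 2) * ‖(xk - τ • g xk) - xplus‖ ^ 2 ≤
      μ * τ * c y + (1 / 2) * ‖(xk - τ • g xk) - y‖ ^ 2)
    (hdk : dk = xplus - xk) :
    ⟪dk + τ • (g xk - g xstar), xstar - xplus⟫ ≥ 0 := by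
  have hprox : IsProxPoint (fun y => μ * τ * c y) (xk - τ • g xk) xplus := hxplus
  have hvar := hprox.inner_le (hc.smul (by positivity)) xstar
  have hepi := hopt xplus (c xplus) le_rfl
  rw [show xk - τ • g xk - xplus = -(dk + τ • g xk) by rw [hdk]; module, inner_neg_left] at hvar
  rw [show xplus - xstar = -(xstar - xplus) by abel, inner_neg_right] at hepi
  rw [smul_sub, ← add_sub_assoc, inner_sub_left, real_inner_smul_left]
  linarith [mul_nonneg hτ.le hepi]

/-- Combining the optimality condition at `x*` with the proximal step:
`⟪d_k + τ(∇f(x_k) − ∇f(x*)), x* − x_k⁺⟫ ≥ 0`. -/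
theorem optimality_prox_ineq (n : ℕ) (f c : EuclideanSpace ℝ (Fin n) → ℝ)
    (g : EuclideanSpace ℝ (Fin n) → EuclideanSpace ℝ (Fin n))
    (hdiff : ∀ x, HasGradientAt f (g x) x)
    (hc : ConvexOn ℝ Set.univ c) (μ : ℝ) (hμ : 0 < μ) (τ : ℝ) (hτ : 0 < τ)
    (xstar : EuclideanSpace ℝ (Fin n))
    (hopt : ∀ x : EuclideanSpace ℝ (Fin n), ∀ ζ : ℝ, c x ≤ ζ →
      ⟪g xstar, x - xstar⟫ + μ * (ζ - c xstar) ≥ 0)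
    (xk xplus dk : EuclideanSpace ℝ (Fin n))
    (hxplus : ∀ y, μ * τ * c xplus + (1 / 2) * ‖(xk - τ • g xk) - xplus‖ ^ 2 ≤
      μ * τ * c y + (1 / 2) * ‖(xk - τ • g xk) - y‖ ^ 2)
    (hdk : dk = xplus - xk) :
    ⟪dk + τ • (g xk - g xstar), xstar - xplus⟫ ≥ 0 :=
  optimality_prox_ineq_general n c g hc μ hμ τ hτ xstar hopt xk xplus dk hxplus hdk
end
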